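/- arXiv:2503.12860 — 5 statements merged into one kernel-verified Lean document; each statement's English description precedes it below -/
import Mathlib

section
/- Let G be a finite simple graph, let u ≠ v be vertices of G, and let P be a longest (u,v)-path in G with vertex sequence p₀ = u, p₁, …, p_m = v. Let H be a connected component of G − V(P). Then the set A = {p_{i+1} : 0 ≤ i < m and p_i has a neighbor in H} is an independent set in G. -/
/-!
If `p_{i+1}` and `p_{j+1}` (with `i < j`) were adjacent while `p_i` and `p_j` both have a neighbour
in `H`, then going `u = p_0, …, p_i`, through `H` to `p_j`, back along `P` to `p_{i+1}`, over the
edge to `p_{j+1}` and on to `p_m = v` would give a `(u, v)`-path that visits every vertex of `P`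
and at least one vertex of `H`, contradicting the maximality of `P`.
-/

open SimpleGraph

namespace SimpleGraph.Walk

variable {V : Type*} {G : SimpleGraph V}

theorem exists_longer_path_of_detour {u v a a' b b' x y : V}
    (A : G.Walk u a) (B : G.Walk a' b) (C : G.Walk b' v) (haa' : G.Adj a a') (hbb' : G.Adj b b')
    (hP : (A.append (cons haa' (B.append (cons hbb' C)))).IsPath)
    (R : G.Walk x y) (hR : R.IsPath)
    (hRP : ∀ z ∈ R.support, z ∉ (A.append (cons haa' (B.append (cons hbb' C)))).support)
    (hax : G.Adj a x) (hyb : G.Adj y b) (ha'b' : G.Adj a' b') :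
    ∃ Q : G.Walk u v, Q.IsPath ∧
      (A.append (cons haa' (B.append (cons hbb' C)))).length < Q.length := by
  set P := A.append (cons haa' (B.append (cons hbb' C)))
  let Q := A.append (cons hax (R.append (cons hyb (B.reverse.append (cons ha'b' C)))))
  have hperm : Q.support.Perm (P.support ++ R.support) := by
    classical
    simp only [Q, P, support_append, support_cons, support_reverse, List.tail_cons]
    rw [List.perm_iff_count]
    intro z
    simp only [List.count_append, List.count_reverse]
    omega
  refine ⟨Q, (isPath_def Q).2 (hperm.nodup_iff.2 ?_), ?_⟩
  · exact List.nodup_append.2 ⟨hP.support_nodup, hR.support_nodup,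
      fun z hz w hw hzw => hRP w hw (hzw ▸ hz)⟩
  · have hlen := hperm.length_eq
    simp only [List.length_append, length_support] at hlen
    omega

theorem exists_eq_append_cons_append_cons {u v : V} (P : G.Walk u v) {i j : ℕ} (hij : i < j)
    (hj : j < P.length) :
    ∃ (A : G.Walk u (P.getVert i)) (B : G.Walk (P.getVert (i + 1)) (P.getVert j))
      (C : G.Walk (P.getVert (j + 1)) v) (hi : G.Adj (P.getVert i) (P.getVert (i + 1)))
      (hj : G.Adj (P.getVert j) (P.getVert (j + 1))),
      P = A.append (cons hi (B.append (cons hj C))) := by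
  have hB : (P.drop (i + 1)).getVert (j - (i + 1)) = P.getVert j := by
    rw [drop_getVert]; congr 1; omega
  refine ⟨P.take i, ((P.drop (i + 1)).take (j - (i + 1))).copy rfl hB, P.drop (j + 1),
    P.adj_getVert_succ (by omega), P.adj_getVert_succ hj, ext_support ?_⟩
  have hdrop : P.support.drop (j + 1) = (P.support.drop (i + 1)).drop (j - i) := by
    rw [List.drop_drop]; congr 1; omega
  have htake : j - (i + 1) + 1 = j - i := by omega
  simp only [support_append, support_cons, support_copy, support_take,
    drop_support_eq_support_drop_min, List.tail_cons, min_eq_left (by omega : i + 1 ≤ P.length),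
    min_eq_left (by omega : j + 1 ≤ P.length), hdrop, htake]
  rw [List.take_append_drop, List.take_append_drop]

theorem not_adj_getVert_succ_of_forall_length_le {u v x y : V} {P : G.Walk u v} (hP : P.IsPath)
    (hlong : ∀ Q : G.Walk u v, Q.IsPath → Q.length ≤ P.length) {i j : ℕ} (hij : i < j)
    (hj : j < P.length) (R : G.Walk x y) (hR : R.IsPath) (hRP : ∀ z ∈ R.support, z ∉ P.support)
    (hix : G.Adj (P.getVert i) x) (hjy : G.Adj (P.getVert j) y) :
    ¬ G.Adj (P.getVert (i + 1)) (P.getVert (j + 1)) := by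
  intro hadj
  obtain ⟨A, B, C, hi, hj, hPeq⟩ := P.exists_eq_append_cons_append_cons hij hj
  obtain ⟨Q, hQ, hlt⟩ := exists_longer_path_of_detour A B C hi hj (hPeq ▸ hP) R hR
    (hPeq ▸ hRP) hix hjy.symm hadj
  exact (hlong Q hQ).not_gt (hPeq ▸ hlt)

end SimpleGraph.Walk

theorem SimpleGraph.ConnectedComponent.exists_isPath_of_mem_supp_induce {V : Type*}
    {G : SimpleGraph V} {s : Set V} {C : (G.induce s).ConnectedComponent} {x y : s}
    (hx : x ∈ C.supp) (hy : y ∈ C.supp) :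
    ∃ R : G.Walk x y, R.IsPath ∧ ∀ z ∈ R.support, z ∈ s := by
  obtain ⟨R, hR⟩ := (C.reachable_of_mem_supp hx hy).exists_isPath
  refine ⟨R.map (Embedding.induce s).toHom, hR.map Subtype.val_injective, ?_⟩
  intro z hz
  obtain ⟨z', -, rfl⟩ := List.mem_map.1 (Walk.support_map _ R ▸ hz)
  exact z'.2

theorem stmt_2_general {V : Type*} (G : SimpleGraph V)
    (u v : V) (P : G.Walk u v) (hP : P.IsPath)
    (hlong : ∀ Q : G.Walk u v, Q.IsPath → Q.length ≤ P.length)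
    (m : ℕ) (hm : m = P.length)
    (p : ℕ → V) (hp : ∀ i, p i = P.getVert i)
    (C : (G.induce {w : V | w ∉ P.support}).ConnectedComponent)
    (A : Set V)
    (hA : A = {w | ∃ i < m, w = p (i + 1) ∧ ∃ h ∈ C.supp, G.Adj (p i) (↑h : V)}) :
    ∀ a ∈ A, ∀ b ∈ A, ¬ G.Adj a b := by
  subst hA hm
  rintro a ⟨i, hi, rfl, x, hx, hix⟩ b ⟨j, hj, rfl, y, hy, hjy⟩ hadj
  simp only [hp] at hix hjy hadj
  obtain ⟨R, hR, hRP⟩ := C.exists_isPath_of_mem_supp_induce hx hy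
  rcases lt_trichotomy i j with hij | rfl | hji
  · exact Walk.not_adj_getVert_succ_of_forall_length_le hP hlong hij hj R hR hRP hix hjy hadj
  · exact G.irrefl hadj
  · exact Walk.not_adj_getVert_succ_of_forall_length_le hP hlong hji hi R.reverse hR.reverse
      (fun z hz => hRP z (by simpa using hz)) hjy hix hadj.symm

/-- If P is a longest (u,v)-path and H is a component of G − V(P),
then the set of successors on P of vertices having a neighbour in H is independent. -/
theorem stmt_2 {V : Type*} [Fintype V] [DecidableEq V] (G : SimpleGraph V)
    (u v : V) (huv : u ≠ v) (P : G.Walk u v) (hP : P.IsPath)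
    (hlong : ∀ Q : G.Walk u v, Q.IsPath → Q.length ≤ P.length)
    (m : ℕ) (hm : m = P.length)
    (p : ℕ → V) (hp : ∀ i, p i = P.getVert i)
    (C : (G.induce {w : V | w ∉ P.support}).ConnectedComponent)
    (A : Set V)
    (hA : A = {w | ∃ i < m, w = p (i + 1) ∧ ∃ h ∈ C.supp, G.Adj (p i) (↑h : V)}) :
    ∀ a ∈ A, ∀ b ∈ A, ¬ G.Adj a b :=
  stmt_2_general G u v P hP hlong m hm p hp C A hA
end

section
/- Let G be a finite simple graph, let u ≠ v be vertices of G, and let P be a longest (u,v)-path in G with vertex sequence p₀ = u, p₁, …, p_m = v. Let H be a connected component of G − V(P). Then for every index i with 0 ≤ i < m, the vertices p_i and p_{i+1} do not both have a neighbor in H. -/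
/-!
If two consecutive vertices `pᵢ, pᵢ₊₁` of a `(u,v)`-path had neighbours `a, b` in the same
component `H` of `G - V(P)`, then replacing the edge `pᵢpᵢ₊₁` by `pᵢ a ⋯ b pᵢ₊₁`, with `a ⋯ b`
a path inside `H`, would give a strictly longer `(u,v)`-path.
-/

namespace SimpleGraph

variable {V : Type*} {G : SimpleGraph V}

namespace Walk

theorem IsPath.exists_detour {u v : V} {P : G.Walk u v} (hP : P.IsPath) {i : ℕ}
    (hi : i < P.length) {a b : V} {W : G.Walk a b} (hW : W.IsPath)
    (hWP : W.support.Disjoint P.support) (ha : G.Adj (P.getVert i) a)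
    (hb : G.Adj (P.getVert (i + 1)) b) :
    ∃ Q : G.Walk u v, Q.IsPath ∧ Q.length = P.length + W.length + 1 ∧
      Q.support ⊆ P.support ++ W.support := by
  induction P generalizing i with
  | nil => simp at hi
  | @cons u w v huw P ih =>
    obtain ⟨hP, huP⟩ := (cons_isPath_iff huw P).mp hP
    have hWP' : W.support.Disjoint P.support := List.disjoint_of_disjoint_cons_right hWP
    cases i with
    | zero =>
      rw [getVert_zero] at ha
      rw [getVert_cons_succ, getVert_zero] at hb
      refine ⟨cons ha (W.append (cons hb.symm P)), ?_, ?_, ?_⟩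
      · rw [isPath_def, support_cons, support_append, support_cons, List.tail_cons,
          List.nodup_cons, List.nodup_append]
        refine ⟨?_, hW.support_nodup, hP.support_nodup, fun x hx y hy => ?_⟩
        · rw [List.mem_append, not_or]
          exact ⟨fun hu => hWP hu (start_mem_support _), huP⟩
        · rintro rfl
          exact hWP' hx hy
      · simp only [length_cons, length_append]
        omega
      · intro x hx
        simp only [support_cons, support_append, List.tail_cons, List.mem_cons,
          List.mem_append] at hx ⊢
        tauto
    | succ i =>
      rw [getVert_cons_succ] at ha hb
      obtain ⟨Q, hQ, hQlen, hQsupp⟩ := ih hP (by simpa using hi) hWP' ha hb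
      refine ⟨cons huw Q, (cons_isPath_iff huw Q).mpr ⟨hQ, fun hu => ?_⟩, ?_, ?_⟩
      · rcases List.mem_append.mp (hQsupp hu) with h | h
        · exact huP h
        · exact hWP h (start_mem_support _)
      · simp only [length_cons, hQlen]
        omega
      · intro x hx
        simp only [support_cons, List.mem_cons, List.cons_append] at hx ⊢
        exact hx.imp_right (fun h => hQsupp h)

end Walk

theorem ConnectedComponent.exists_isPath_of_mem_supp {s : Set V}
    {C : (G.induce s).ConnectedComponent} {x y : s} (hx : x ∈ C.supp) (hy : y ∈ C.supp) :
    ∃ W : G.Walk x y, W.IsPath ∧ ∀ z ∈ W.support, z ∈ s := by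
  obtain ⟨W, hW⟩ := (ConnectedComponent.exact (hx.trans hy.symm)).exists_isPath
  let f := Embedding.induce (G := G) s
  refine ⟨W.map f.toHom, hW.map f.injective, ?_⟩
  intro z hz
  obtain ⟨z, -, rfl⟩ := List.mem_map.mp ((Walk.support_map _ _) ▸ hz)
  exact z.2

end SimpleGraph

theorem stmt_3_general {V : Type*} (G : SimpleGraph V)
    (u v : V) (P : G.Walk u v) (hP : P.IsPath)
    (hlong : ∀ Q : G.Walk u v, Q.IsPath → Q.length ≤ P.length)
    (m : ℕ) (hm : m = P.length)
    (p : ℕ → V) (hp : ∀ i, p i = P.getVert i)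
    (C : (G.induce {w : V | w ∉ P.support}).ConnectedComponent) :
    ∀ i < m, ¬ ((∃ h ∈ C.supp, G.Adj (p i) (↑h : V)) ∧
      (∃ h ∈ C.supp, G.Adj (p (i + 1)) (↑h : V))) := by
  rintro i hi ⟨⟨a, haC, ha⟩, ⟨b, hbC, hb⟩⟩
  obtain ⟨W, hW, hWP⟩ := SimpleGraph.ConnectedComponent.exists_isPath_of_mem_supp haC hbC
  rw [hp] at ha hb
  obtain ⟨Q, hQ, hQlen, -⟩ :=
    hP.exists_detour (hm ▸ hi) hW (List.disjoint_left.mpr hWP) ha hb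
  have := hlong Q hQ
  omega

/-- If P is a longest (u,v)-path and H is a component of G − V(P),
then no two consecutive vertices of P both have a neighbour in H. -/
theorem stmt_3 {V : Type*} [Fintype V] [DecidableEq V] (G : SimpleGraph V)
    (u v : V) (huv : u ≠ v) (P : G.Walk u v) (hP : P.IsPath)
    (hlong : ∀ Q : G.Walk u v, Q.IsPath → Q.length ≤ P.length)
    (m : ℕ) (hm : m = P.length)
    (p : ℕ → V) (hp : ∀ i, p i = P.getVert i)
    (C : (G.induce {w : V | w ∉ P.support}).ConnectedComponent) :
    ∀ i < m, ¬ ((∃ h ∈ C.supp, G.Adj (p i) (↑h : V)) ∧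
      (∃ h ∈ C.supp, G.Adj (p (i + 1)) (↑h : V))) :=
  stmt_3_general G u v P hP hlong m hm p hp C
end

section
/- Let k be a positive integer and let G be a finite simple graph that is 2k-connected and (P₂ ∪ kP₁)-free. Let u ≠ v be vertices of G and let P be a longest (u,v)-path in G that is not a Hamilton path. Then every connected component of G − V(P) consists of a single vertex. -/
/-!
Suppose an edge `ab` lies off the longest path `P`. Let `D` be the set of vertices reachable
from `a` avoiding `P`, and `A` the set of vertices of `P` with a neighbour in `D`. If `w ∈ A`
and `w⁺` is its successor on `P`, then `w⁺` has no neighbour in `D`, and the successors of two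
distinct vertices of `A` are nonadjacent: otherwise a detour through `D` yields a longer
`(u,v)`-path. In particular `u` or its successor lies on `P` outside `A`, so `A` separates `a`
from that vertex and `2k`-connectivity gives `|A| ≥ 2k`. The successors of `k` vertices of
`A \ {v}`, together with `a` and `b`, then induce a `P₂ ∪ kP₁`.
-/

namespace SimpleGraph

variable {V : Type*} {G : SimpleGraph V}

theorem le_ncard_of_forall_walk_meets {m : ℕ}
    (hconn : ∀ T : Set V, T.ncard < m → (G.induce Tᶜ).Connected) {T : Set V} {a p : V}
    (ha : a ∉ T) (hp : p ∉ T) (hmeets : ∀ W : G.Walk a p, ∃ y ∈ W.support, y ∈ T) :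
    m ≤ T.ncard := by
  by_contra! hlt
  obtain ⟨W⟩ := (hconn T hlt).preconnected ⟨a, ha⟩ ⟨p, hp⟩
  have hWT : ∀ y ∈ (W.map (Embedding.induce Tᶜ).toHom).support, y ∉ T := by
    intro y hy
    rw [Walk.support_map, List.mem_map] at hy
    obtain ⟨y', -, rfl⟩ := hy
    exact y'.2
  obtain ⟨y, hyW, hyT⟩ := hmeets (W.map (Embedding.induce Tᶜ).toHom)
  exact hWT y hyW hyT

theorem ConnectedComponent.exists_supp_eq_singleton_of_eq_bot {W : Type*}
    {H : SimpleGraph W} (hH : H = ⊥) (C : H.ConnectedComponent) : ∃ z, C.supp = {z} := by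
  induction C using ConnectedComponent.ind with
  | h z =>
    refine ⟨z, Set.ext fun x => ?_⟩
    rw [ConnectedComponent.mem_supp_iff, ConnectedComponent.eq, hH, reachable_bot,
      Set.mem_singleton_iff]

def IsInducedP2UnionKP1 (G : SimpleGraph V) {k : ℕ} (a b : V) (c : Fin k → V) : Prop :=
  Function.Injective c ∧ a ≠ b ∧ (∀ i, a ≠ c i) ∧ (∀ i, b ≠ c i) ∧ G.Adj a b ∧
    (∀ i, ¬ G.Adj a (c i)) ∧ (∀ i, ¬ G.Adj b (c i)) ∧ (∀ i j, ¬ G.Adj (c i) (c j))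

def reachableAvoiding (G : SimpleGraph V) (S : Set V) (a : V) : Set V :=
  {x | ∃ W : G.Walk a x, ∀ y ∈ W.support, y ∉ S}

def attachments (G : SimpleGraph V) (S : Set V) (a : V) : Set V :=
  {w ∈ S | ∃ c ∈ G.reachableAvoiding S a, G.Adj c w}

namespace reachableAvoiding

variable {S : Set V} {a x y : V}

theorem self_mem (ha : a ∉ S) : a ∈ G.reachableAvoiding S a :=
  ⟨.nil, by simpa using ha⟩

theorem notMem (hx : x ∈ G.reachableAvoiding S a) : x ∉ S :=
  let ⟨W, hW⟩ := hx; hW x W.end_mem_support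

theorem mem_of_adj (hx : x ∈ G.reachableAvoiding S a) (hxy : G.Adj x y) (hy : y ∉ S) :
    y ∈ G.reachableAvoiding S a := by
  obtain ⟨W, hW⟩ := hx
  refine ⟨W.concat hxy, fun z hz => ?_⟩
  rw [Walk.support_concat, List.mem_append, List.mem_singleton] at hz
  exact hz.elim (hW z) (· ▸ hy)

theorem exists_isPath [DecidableEq V] (hx : x ∈ G.reachableAvoiding S a)
    (hy : y ∈ G.reachableAvoiding S a) :
    ∃ Q : G.Walk x y, Q.IsPath ∧ ∀ z ∈ Q.support, z ∉ S := by
  obtain ⟨W₁, hW₁⟩ := hx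
  obtain ⟨W₂, hW₂⟩ := hy
  refine ⟨(W₁.reverse.append W₂).bypass, Walk.bypass_isPath _, fun z hz => ?_⟩
  have := Walk.support_bypass_subset_support _ hz
  rw [Walk.mem_support_append_iff, Walk.support_reverse, List.mem_reverse] at this
  exact this.elim (hW₁ z) (hW₂ z)

theorem exists_mem_attachments (hx : x ∈ G.reachableAvoiding S a) (hy : y ∈ S)
    (W : G.Walk x y) : ∃ z ∈ W.support, z ∈ G.attachments S a := by
  obtain ⟨d, hd, hd₁, hd₂⟩ := W.exists_boundary_dart _ hx fun h => notMem h hy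
  have hS : d.snd ∈ S := by_contra fun h => hd₂ (mem_of_adj hd₁ d.adj h)
  exact ⟨d.snd, W.dart_snd_mem_support_of_mem_darts hd, hS, d.fst, hd₁, d.adj⟩

end reachableAvoiding

theorem Walk.ncard_le_card_filter_getVert_add_one {u v : V} (P : G.Walk u v) {A : Set V}
    [DecidablePred (· ∈ A)] (hA : A ⊆ {w | w ∈ P.support}) :
    A.ncard ≤ ((Finset.range P.length).filter (P.getVert · ∈ A)).card + 1 := by
  set I := (Finset.range P.length).filter (P.getVert · ∈ A)
  have hAI : A ⊆ insert v (P.getVert '' I) := by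
    intro w hw
    obtain ⟨n, rfl, hn⟩ := mem_support_iff_exists_getVert.mp (hA hw)
    rcases hn.lt_or_eq with hn | rfl
    · exact Or.inr ⟨n, by simpa [I] using ⟨hn, hw⟩, rfl⟩
    · exact Or.inl P.getVert_length
  calc A.ncard ≤ (insert v (P.getVert '' I)).ncard := Set.ncard_le_ncard hAI (Set.toFinite _)
    _ ≤ (P.getVert '' I).ncard + 1 := Set.ncard_insert_le _ _
    _ ≤ I.card + 1 := by
      grw [Set.ncard_image_le (Finset.finite_toSet I), Set.ncard_coe_finset]

def Walk.IsLongestPath {u v : V} (P : G.Walk u v) : Prop :=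
  P.IsPath ∧ ∀ Q : G.Walk u v, Q.IsPath → Q.length ≤ P.length

namespace Walk.IsLongestPath

variable {u v : V} {P : G.Walk u v}

theorem eq_nil_of_support_perm (hP : P.IsLongestPath) (W : G.Walk u v) {l : List V}
    (hl : l.Nodup) (hlP : ∀ y ∈ l, y ∉ P.support) (hperm : W.support.Perm (P.support ++ l)) :
    l = [] := by
  have hW : W.IsPath := W.isPath_def.mpr <| hperm.nodup_iff.mpr <|
    List.nodup_append.mpr ⟨hP.1.support_nodup, hl, fun x hx y hy hxy => hlP y hy (hxy ▸ hx)⟩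
  have hlen := hperm.length_eq
  rw [List.length_append, length_support, length_support] at hlen
  have := hP.2 W hW
  exact List.eq_nil_of_length_eq_zero (by omega)

theorem not_adj_of_detour (hP : P.IsLongestPath) {i : ℕ} (hi : i < P.length) {c z : V}
    (Q : G.Walk c z) (hQ : Q.IsPath) (hQP : ∀ y ∈ Q.support, y ∉ P.support)
    (hc : G.Adj (P.getVert i) c) : ¬ G.Adj z (P.getVert (i + 1)) := by
  intro hz
  refine Q.support_ne_nil <| hP.eq_nil_of_support_perm
    ((P.take i).append (cons hc (Q.append (cons hz (P.drop (i + 1)))))) hQ.support_nodup hQP ?_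
  conv_rhs => rw [← List.take_append_drop (i + 1) P.support]
  simp only [support_append, support_cons, List.tail_cons, support_take,
    drop_support_eq_support_drop_min, Nat.min_eq_left (show i + 1 ≤ P.length from hi),
    List.append_assoc]
  exact List.perm_append_comm.append_left _

theorem not_adj_of_crossing (hP : P.IsLongestPath) {i j : ℕ} (hij : i < j)
    (hj : j < P.length) {c z : V} (Q : G.Walk c z) (hQ : Q.IsPath)
    (hQP : ∀ y ∈ Q.support, y ∉ P.support)
    (hc : G.Adj (P.getVert i) c) (hz : G.Adj z (P.getVert j)) :
    ¬ G.Adj (P.getVert (i + 1)) (P.getVert (j + 1)) := by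
  intro hx
  -- the longer path: `u → Pᵢ → Q → Pⱼ`, back along `P` to `Pᵢ₊₁`, then `Pⱼ₊₁ → v`
  let R : G.Walk (P.getVert j) (P.getVert (i + 1)) :=
    ((P.take j).drop (i + 1)).reverse.copy rfl (by rw [take_getVert, Nat.min_eq_right hij])
  refine Q.support_ne_nil <| hP.eq_nil_of_support_perm
    ((P.take i).append (cons hc (Q.append (cons hz (R.append (cons hx (P.drop (j + 1))))))))
    hQ.support_nodup hQP ?_
  have hsplit : P.support = P.support.take (i + 1) ++ (P.support.take (j + 1)).drop (i + 1) ++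
      P.support.drop (j + 1) := by
    conv_lhs => rw [← List.take_append_drop (j + 1) P.support,
      ← List.take_append_drop (i + 1) (P.support.take (j + 1)), List.take_take,
      Nat.min_eq_left (show i + 1 ≤ j + 1 by omega)]
  rw [hsplit]
  simp only [R, support_append, support_cons, List.tail_cons, support_copy, support_reverse,
    support_take, drop_support_eq_support_drop_min, take_length, Nat.min_eq_left hj.le,
    Nat.min_eq_left (show i + 1 ≤ j from hij), Nat.min_eq_left (show j + 1 ≤ P.length from hj),
    List.append_assoc, List.perm_append_left_iff]
  exact List.perm_append_comm.trans <| by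
    simpa only [List.append_assoc] using ((List.reverse_perm _).append_right _).append_right _

variable [DecidableEq V] {a : V}

theorem not_adj_getVert_succ_of_mem_attachments (hP : P.IsLongestPath) {i : ℕ}
    (hi : i < P.length) (hw : P.getVert i ∈ G.attachments {w | w ∈ P.support} a) {z : V}
    (hz : z ∈ G.reachableAvoiding {w | w ∈ P.support} a) : ¬ G.Adj z (P.getVert (i + 1)) := by
  obtain ⟨-, c, hc, hwc⟩ := hw
  obtain ⟨Q, hQ, hQP⟩ := reachableAvoiding.exists_isPath hc hz
  exact hP.not_adj_of_detour hi Q hQ hQP hwc.symm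

theorem not_adj_getVert_succ_succ_of_mem_attachments (hP : P.IsLongestPath) {i j : ℕ}
    (hij : i < j) (hj : j < P.length) (hi : P.getVert i ∈ G.attachments {w | w ∈ P.support} a)
    (hj' : P.getVert j ∈ G.attachments {w | w ∈ P.support} a) :
    ¬ G.Adj (P.getVert (i + 1)) (P.getVert (j + 1)) := by
  obtain ⟨-, c, hc, hic⟩ := hi
  obtain ⟨-, z, hz, hjz⟩ := hj'
  obtain ⟨Q, hQ, hQP⟩ := reachableAvoiding.exists_isPath hc hz
  exact hP.not_adj_of_crossing hij hj Q hQ hQP hic.symm hjz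

theorem le_ncard_attachments (hP : P.IsLongestPath) (huv : u ≠ v) {m : ℕ}
    (hconn : ∀ T : Set V, T.ncard < m → (G.induce Tᶜ).Connected) (ha : a ∉ P.support) :
    m ≤ (G.attachments {w | w ∈ P.support} a).ncard := by
  have haD := reachableAvoiding.self_mem (G := G) (S := {w | w ∈ P.support}) ha
  obtain ⟨p, hpP, hpA⟩ : ∃ p ∈ P.support, p ∉ G.attachments {w | w ∈ P.support} a := by
    by_cases hu : u ∈ G.attachments {w | w ∈ P.support} a
    · have hlen : 0 < P.length := not_nil_iff_lt_length.mp (not_nil_of_ne huv)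
      refine ⟨P.getVert 1, P.getVert_mem_support 1, fun ⟨_, c, hc, hc1⟩ => ?_⟩
      exact hP.not_adj_getVert_succ_of_mem_attachments hlen (by simpa using hu) hc hc1
    · exact ⟨u, P.start_mem_support, hu⟩
  exact le_ncard_of_forall_walk_meets hconn (fun h => ha h.1) hpA
    (reachableAvoiding.exists_mem_attachments haD hpP)

theorem exists_isInducedP2UnionKP1 (hP : P.IsLongestPath) (huv : u ≠ v) {k : ℕ}
    (hconn : ∀ T : Set V, T.ncard < 2 * k → (G.induce Tᶜ).Connected) {b : V}
    (ha : a ∉ P.support) (hb : b ∉ P.support) (hab : G.Adj a b) :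
    ∃ c : Fin k → V, G.IsInducedP2UnionKP1 a b c := by
  classical
  have haD := reachableAvoiding.self_mem (G := G) (S := {w | w ∈ P.support}) ha
  have hbD := reachableAvoiding.mem_of_adj haD hab hb
  have h2k := hP.le_ncard_attachments huv hconn ha
  have hcard := P.ncard_le_card_filter_getVert_add_one
    (A := G.attachments {w | w ∈ P.support} a) fun _ hw => hw.1
  obtain ⟨t, htI, htk⟩ := Finset.exists_subset_card_eq
    (s := (Finset.range P.length).filter (P.getVert · ∈ G.attachments {w | w ∈ P.support} a))
    (n := k) (by omega)
  set f := t.orderEmbOfFin htk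
  have hf : ∀ m, f m < P.length ∧ P.getVert (f m) ∈ G.attachments {w | w ∈ P.support} a :=
    fun m => by simpa using htI (t.orderEmbOfFin_mem htk m)
  refine ⟨fun m => P.getVert (f m + 1), fun m m' h => ?_, hab.ne,
    fun m h => ha (h ▸ P.getVert_mem_support _), fun m h => hb (h ▸ P.getVert_mem_support _),
    hab, fun m => hP.not_adj_getVert_succ_of_mem_attachments (hf m).1 (hf m).2 haD,
    fun m => hP.not_adj_getVert_succ_of_mem_attachments (hf m).1 (hf m).2 hbD, fun m m' => ?_⟩
  · have := hP.1.getVert_injOn (Nat.succ_le_of_lt (hf m).1) (Nat.succ_le_of_lt (hf m').1) h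
    exact f.injective (by omega)
  · show ¬ G.Adj (P.getVert (f m + 1)) (P.getVert (f m' + 1))
    rcases lt_trichotomy (f m) (f m') with h | h | h
    · exact hP.not_adj_getVert_succ_succ_of_mem_attachments h (hf m').1 (hf m).2 (hf m').2
    · exact h ▸ G.loopless.irrefl _
    · exact fun hadj => hP.not_adj_getVert_succ_succ_of_mem_attachments h (hf m).1 (hf m').2
        (hf m).2 hadj.symm

end Walk.IsLongestPath

end SimpleGraph

theorem stmt_4_general {V : Type*} [DecidableEq V] (G : SimpleGraph V) (k : ℕ)
    (hconn : ∀ S : Set V, S.ncard < 2 * k → (G.induce Sᶜ).Connected)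
    (hfree : ¬ ∃ (a b : V) (c : Fin k → V), Function.Injective c ∧ a ≠ b ∧
      (∀ i, a ≠ c i) ∧ (∀ i, b ≠ c i) ∧ G.Adj a b ∧
      (∀ i, ¬ G.Adj a (c i)) ∧ (∀ i, ¬ G.Adj b (c i)) ∧ (∀ i j, ¬ G.Adj (c i) (c j)))
    (u v : V) (huv : u ≠ v) (P : G.Walk u v) (hP : P.IsPath)
    (hlong : ∀ Q : G.Walk u v, Q.IsPath → Q.length ≤ P.length) :
    ∀ C : (G.induce {w : V | w ∉ P.support}).ConnectedComponent,
      ∃ z, C.supp = {z} := by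
  refine SimpleGraph.ConnectedComponent.exists_supp_eq_singleton_of_eq_bot ?_
  refine SimpleGraph.eq_bot_iff_forall_not_adj.mpr fun a b hab => ?_
  obtain ⟨c, hc⟩ := SimpleGraph.Walk.IsLongestPath.exists_isInducedP2UnionKP1 ⟨hP, hlong⟩ huv
    hconn a.2 b.2 (by simpa using hab)
  exact hfree ⟨a, b, c, hc⟩

/-- In a 2k-connected (P₂ ∪ kP₁)-free graph, if P is a longest
(u,v)-path which is not a Hamilton path, then every component of G − V(P)
is a single vertex. -/
theorem stmt_4 {V : Type*} [Fintype V] [DecidableEq V] (G : SimpleGraph V) (k : ℕ)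
    (hk : 1 ≤ k)
    (hcard : 2 * k < Fintype.card V)
    (hconn : ∀ S : Set V, S.ncard < 2 * k → (G.induce Sᶜ).Connected)
    (hfree : ¬ ∃ (a b : V) (c : Fin k → V), Function.Injective c ∧ a ≠ b ∧
      (∀ i, a ≠ c i) ∧ (∀ i, b ≠ c i) ∧ G.Adj a b ∧
      (∀ i, ¬ G.Adj a (c i)) ∧ (∀ i, ¬ G.Adj b (c i)) ∧ (∀ i j, ¬ G.Adj (c i) (c j)))
    (u v : V) (huv : u ≠ v) (P : G.Walk u v) (hP : P.IsPath)
    (hlong : ∀ Q : G.Walk u v, Q.IsPath → Q.length ≤ P.length)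
    (hnotham : ¬ ∀ w : V, w ∈ P.support) :
    ∀ C : (G.induce {w : V | w ∉ P.support}).ConnectedComponent,
      ∃ z, C.supp = {z} :=
  stmt_4_general G k hconn hfree u v huv P hP hlong
end

section
/- Let k be a positive integer and let G be a finite simple graph that is 2k-connected and (P₂ ∪ kP₁)-free. Let u ≠ v be vertices of G, let P be a longest (u,v)-path with vertex sequence p₀ = u, …, p_m = v, and let x ∈ V(G) \ V(P) be a vertex all of whose neighbors lie on P. Set J = {i : 0 ≤ i ≤ m, p_i ∈ N(x)} and N⁺ = {p_{i+1} : i ∈ J, i < m}. Let i ∈ J be such that J contains an element greater than i, let r be the smallest element of J greater than i, and let X ⊆ N⁺ be any set with p_{i+1} ∈ X and |X| = 2k − 1. Then for every integer j with 1 ≤ j ≤ r − i − 1: if j is odd, then p_{i+j} has no neighbor in X, and if j is even, then p_{i+j} has at least k + 1 neighbors in X. -/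
/-!
Write `p_t` for the vertices of the longest path `P`. Rerouting `P` through `x` (enter `x` from
one neighbour `p_a`, leave it towards another `p_b`, and reconnect the remaining segments of `P`
along a hypothetical edge) would give a longer path. This shows that `x` together with the
successors `p_{a+1}` of its neighbours is an independent set, and that two consecutive vertices
`p_t, p_{t+1}` have at most one common neighbour among these successors.

Forbidding an induced `P₂ ∪ kP₁` means: if `ab` is an edge and `S` is an independent set
containing no neighbour of `a`, then fewer than `k` vertices of `S` are non-neighbours of `b`.

Now walk from `p_{i+1} ∈ X` towards `p_r`. If `p_t` has no neighbour in `X`, applying this to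
`S = X ∪ {x}` gives `p_{t+1}` at least `k + 1` neighbours in `X`. If `p_t` has at least `k + 1`
neighbours in `X` and `p_{t+1}` had one, it would have at least `k` (take `S = X`), and the two
would share two neighbours in `X`, since `|X| = 2k - 1`.
-/

open Finset

namespace SimpleGraph

variable {V : Type*} {G : SimpleGraph V}

def P2UnionKP1Free (G : SimpleGraph V) (k : ℕ) : Prop :=
  ¬ ∃ (a b : V) (c : Fin k → V), Function.Injective c ∧ a ≠ b ∧
    (∀ i, a ≠ c i) ∧ (∀ i, b ≠ c i) ∧ G.Adj a b ∧
    (∀ i, ¬ G.Adj a (c i)) ∧ (∀ i, ¬ G.Adj b (c i)) ∧ (∀ i j, ¬ G.Adj (c i) (c j))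

theorem P2UnionKP1Free.card_filter_not_adj_lt [DecidableRel G.Adj] {k : ℕ}
    (hG : G.P2UnionKP1Free k) {S : Finset V} (hS : G.IsIndepSet S) {a b : V} (hab : G.Adj a b)
    (hb : b ∉ S) (ha : ∀ c ∈ S, ¬ G.Adj a c) : #{c ∈ S | ¬ G.Adj b c} < k := by
  set C := {c ∈ S | ¬ G.Adj b c}
  by_contra! hk
  let c : Fin k → V := fun n => C.equivFin.symm (Fin.castLE hk n)
  have hc : ∀ n, c n ∈ S ∧ ¬ G.Adj b (c n) := fun n => mem_filter.mp (C.equivFin.symm _).2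
  refine hG ⟨a, b, c, fun n n' h => Fin.castLE_injective hk (C.equivFin.symm.injective
    (Subtype.ext h)), hab.ne, fun n h => (hc n).2 (h ▸ hab.symm), fun n h => hb (h ▸ (hc n).1),
    hab, fun n => ha _ (hc n).1, fun n => (hc n).2, fun n n' h => ?_⟩
  by_cases hnn : c n = c n'
  · exact (hnn ▸ h).ne rfl
  · exact hS (hc n).1 (hc n').1 hnn h

theorem P2UnionKP1Free.succ_le_card_filter_adj [DecidableEq V] [DecidableRel G.Adj] {k : ℕ}
    (hG : G.P2UnionKP1Free k) {S : Finset V} {x a b : V} (hS : G.IsIndepSet ↑(insert x S))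
    (hxS : x ∉ S) (hcard : #S = 2 * k - 1) (hab : G.Adj a b) (hxa : ¬ G.Adj x a)
    (hxb : ¬ G.Adj x b) (ha : ∀ c ∈ S, ¬ G.Adj a c) (hb : b ∉ S) :
    k + 1 ≤ #{c ∈ S | G.Adj b c} := by
  have hbx : b ≠ x := by rintro rfl; exact hxa hab.symm
  have h := hG.card_filter_not_adj_lt hS hab (by simp [hb, hbx]) (by
    simp only [mem_insert, forall_eq_or_imp]
    exact ⟨fun h => hxa h.symm, ha⟩)
  rw [filter_insert, if_pos fun h => hxb h.symm, card_insert_of_notMem (by simp [hxS])] at h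
  have := card_filter_add_card_filter_not (s := S) fun c => G.Adj b c
  omega

theorem exists_walk_support_eq_map_range' (f : ℕ → V) {a b : ℕ} (hab : a ≤ b)
    (hf : ∀ t, a ≤ t → t < b → G.Adj (f t) (f (t + 1))) :
    ∃ w : G.Walk (f a) (f b), w.support = (List.range' a (b + 1 - a)).map f := by
  induction b, hab using Nat.le_induction with
  | base => exact ⟨.nil, by simp⟩
  | succ b hab ih =>
    obtain ⟨w, hw⟩ := ih fun t h1 h2 => hf t h1 (by omega)
    refine ⟨w.concat (hf b hab (by omega)), ?_⟩
    rw [Walk.support_concat, hw, show b + 1 + 1 - a = b + 1 - a + 1 by omega, List.range'_concat]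
    simp only [List.map_append, List.map_cons, List.map_nil]
    congr 3
    omega

namespace Walk

variable {u v x : V}

def IsLongestPath_s5 (P : G.Walk u v) : Prop :=
  P.IsPath ∧ ∀ Q : G.Walk u v, Q.IsPath → Q.length ≤ P.length

def succOfNeighborSet (P : G.Walk u v) (x : V) : Set V :=
  {w | ∃ l < P.length, G.Adj x (P.getVert l) ∧ w = P.getVert (l + 1)}

theorem exists_walk_support_eq_map_range'_getVert (P : G.Walk u v) {a b : ℕ} (hab : a ≤ b)
    (hb : b ≤ P.length) :
    ∃ w : G.Walk (P.getVert a) (P.getVert b),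
      w.support = (List.range' a (b + 1 - a)).map P.getVert :=
  exists_walk_support_eq_map_range' _ hab fun _ _ ht => P.adj_getVert_succ (by omega)

namespace IsLongestPath_s5

variable {P : G.Walk u v}

section

variable (hP : P.IsLongestPath_s5) (hx : x ∉ P.support)
include hP hx

/-- `A ++ B` lists the indices `0, …, P.length` in some order, so `W` would be a path longer
than `P`. -/
theorem false_of_detour (W : G.Walk (P.getVert 0) (P.getVert P.length)) (A B : List ℕ)
    (hW : W.support = A.map P.getVert ++ x :: B.map P.getVert)
    (hcover : ∀ s ≤ P.length, s ∈ A ++ B) (hlen : (A ++ B).length = P.length + 1) : False := by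
  have hperm : (A ++ B).Perm (List.range (P.length + 1)) :=
    ((List.subperm_of_subset List.nodup_range fun s hs => hcover s
      (Nat.lt_succ_iff.mp (List.mem_range.mp hs))).perm_of_length_le (by simp [hlen])).symm
  have hpath : (W.copy P.getVert_zero P.getVert_length).IsPath := by
    rw [isPath_copy, isPath_def, hW, List.nodup_middle, List.nodup_cons, ← List.map_append]
    refine ⟨fun h => hx ?_, hperm.nodup_iff.mpr List.nodup_range |>.map_on ?_⟩
    · obtain ⟨s, -, rfl⟩ := List.mem_map.mp h
      exact P.getVert_mem_support s
    · intro s hs t ht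
      exact hP.1.getVert_injOn (Nat.lt_succ_iff.mp (List.mem_range.mp (hperm.subset hs)))
        (Nat.lt_succ_iff.mp (List.mem_range.mp (hperm.subset ht)))
  have hWlen : W.length = P.length + 1 := by
    have := W.length_support
    simp only [hW, List.length_append, List.length_map, List.length_cons] at this hlen
    omega
  have := hP.2 _ hpath
  rw [length_copy] at this
  omega

theorem not_adj_getVert_succ {a : ℕ} (ha : a < P.length) (hxa : G.Adj x (P.getVert a)) :
    ¬ G.Adj x (P.getVert (a + 1)) := by
  intro hxa'
  obtain ⟨w₁, hw₁⟩ := P.exists_walk_support_eq_map_range'_getVert (Nat.zero_le a) ha.le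
  obtain ⟨w₂, hw₂⟩ :=
    P.exists_walk_support_eq_map_range'_getVert (by omega : a + 1 ≤ P.length) le_rfl
  refine hP.false_of_detour hx (w₁.append (.cons hxa.symm (.cons hxa' w₂)))
    (List.range' 0 (a + 1)) (List.range' (a + 1) (P.length - a))
    (by simp [support_append, hw₁, hw₂]) ?_ ?_
  · simp [List.mem_range'_1]; omega
  · simp; omega

theorem not_adj_getVert_succ_succ {a b : ℕ} (hab : a < b) (hb : b < P.length)
    (hxa : G.Adj x (P.getVert a)) (hxb : G.Adj x (P.getVert b)) :
    ¬ G.Adj (P.getVert (a + 1)) (P.getVert (b + 1)) := by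
  intro h
  obtain ⟨w₁, hw₁⟩ := P.exists_walk_support_eq_map_range'_getVert (Nat.zero_le a) (by omega)
  obtain ⟨w₂, hw₂⟩ := P.exists_walk_support_eq_map_range'_getVert (by omega : a + 1 ≤ b) hb.le
  obtain ⟨w₃, hw₃⟩ :=
    P.exists_walk_support_eq_map_range'_getVert (by omega : b + 1 ≤ P.length) le_rfl
  refine hP.false_of_detour hx
    (w₁.append (.cons hxa.symm (.cons hxb (w₂.reverse.append (.cons h w₃)))))
    (List.range' 0 (a + 1))
    ((List.range' (a + 1) (b - a)).reverse ++ List.range' (b + 1) (P.length - b))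
    (by simp [support_append, support_reverse, hw₁, hw₂, hw₃]) ?_ ?_
  · simp [List.mem_range'_1]; omega
  · simp; omega

theorem not_crossing_of_lt {a b t : ℕ} (hab : a < b) (hbt : b < t) (ht : t < P.length)
    (hxa : G.Adj x (P.getVert a)) (hxb : G.Adj x (P.getVert b))
    (h : G.Adj (P.getVert t) (P.getVert (a + 1))) :
    ¬ G.Adj (P.getVert (t + 1)) (P.getVert (b + 1)) := by
  intro h'
  obtain ⟨w₁, hw₁⟩ := P.exists_walk_support_eq_map_range'_getVert (Nat.zero_le a) (by omega)
  obtain ⟨w₂, hw₂⟩ := P.exists_walk_support_eq_map_range'_getVert (by omega : a + 1 ≤ b)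
    (by omega)
  obtain ⟨w₃, hw₃⟩ := P.exists_walk_support_eq_map_range'_getVert (by omega : b + 1 ≤ t) ht.le
  obtain ⟨w₄, hw₄⟩ :=
    P.exists_walk_support_eq_map_range'_getVert (by omega : t + 1 ≤ P.length) le_rfl
  refine hP.false_of_detour hx
    (w₁.append (.cons hxa.symm (.cons hxb
      (w₂.reverse.append (.cons h.symm (w₃.reverse.append (.cons h'.symm w₄)))))))
    (List.range' 0 (a + 1))
    ((List.range' (a + 1) (b - a)).reverse ++ (List.range' (b + 1) (t - b)).reverse ++
      List.range' (t + 1) (P.length - t))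
    (by simp [support_append, support_reverse, hw₁, hw₂, hw₃, hw₄]) ?_ ?_
  · simp [List.mem_range'_1]; omega
  · simp; omega

theorem not_crossing_of_gt {a b t : ℕ} (hab : a < b) (hta : t < a) (hb : b < P.length)
    (hxa : G.Adj x (P.getVert a)) (hxb : G.Adj x (P.getVert b))
    (h : G.Adj (P.getVert t) (P.getVert (a + 1))) :
    ¬ G.Adj (P.getVert (t + 1)) (P.getVert (b + 1)) := by
  intro h'
  obtain ⟨w₁, hw₁⟩ := P.exists_walk_support_eq_map_range'_getVert (Nat.zero_le t) (by omega)
  obtain ⟨w₂, hw₂⟩ := P.exists_walk_support_eq_map_range'_getVert (by omega : a + 1 ≤ b) hb.le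
  obtain ⟨w₃, hw₃⟩ := P.exists_walk_support_eq_map_range'_getVert (by omega : t + 1 ≤ a)
    (by omega)
  obtain ⟨w₄, hw₄⟩ :=
    P.exists_walk_support_eq_map_range'_getVert (by omega : b + 1 ≤ P.length) le_rfl
  refine hP.false_of_detour hx
    (w₁.append (.cons h (w₂.append (.cons hxb.symm (.cons hxa
      (w₃.reverse.append (.cons h' w₄)))))))
    (List.range' 0 (t + 1) ++ List.range' (a + 1) (b - a))
    ((List.range' (t + 1) (a - t)).reverse ++ List.range' (b + 1) (P.length - b))
    (by simp [support_append, support_reverse, hw₁, hw₂, hw₃, hw₄]) ?_ ?_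
  · simp [List.mem_range'_1]; omega
  · simp; omega

theorem not_crossing_of_lt_of_lt {a b t : ℕ} (hat : a < t) (htb : t < b) (hb : b < P.length)
    (hxa : G.Adj x (P.getVert a)) (hxb : G.Adj x (P.getVert b))
    (h : G.Adj (P.getVert t) (P.getVert (b + 1))) :
    ¬ G.Adj (P.getVert (t + 1)) (P.getVert (a + 1)) := by
  intro h'
  obtain ⟨w₁, hw₁⟩ := P.exists_walk_support_eq_map_range'_getVert (Nat.zero_le a) (by omega)
  obtain ⟨w₂, hw₂⟩ := P.exists_walk_support_eq_map_range'_getVert (by omega : t + 1 ≤ b) hb.le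
  obtain ⟨w₃, hw₃⟩ := P.exists_walk_support_eq_map_range'_getVert (by omega : a + 1 ≤ t)
    (by omega)
  obtain ⟨w₄, hw₄⟩ :=
    P.exists_walk_support_eq_map_range'_getVert (by omega : b + 1 ≤ P.length) le_rfl
  refine hP.false_of_detour hx
    (w₁.append (.cons hxa.symm (.cons hxb
      (w₂.reverse.append (.cons h' (w₃.append (.cons h w₄)))))))
    (List.range' 0 (a + 1))
    ((List.range' (t + 1) (b - t)).reverse ++ List.range' (a + 1) (t - a) ++
      List.range' (b + 1) (P.length - b))
    (by simp [support_append, support_reverse, hw₁, hw₂, hw₃, hw₄]) ?_ ?_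
  · simp [List.mem_range'_1]; omega
  · simp; omega

theorem not_common_neighbors {a b t : ℕ} (hab : a < b) (hb : b < P.length) (ht : t < P.length)
    (hxa : G.Adj x (P.getVert a)) (hxb : G.Adj x (P.getVert b))
    (hta : G.Adj (P.getVert t) (P.getVert (a + 1)))
    (htb : G.Adj (P.getVert t) (P.getVert (b + 1)))
    (hta' : G.Adj (P.getVert (t + 1)) (P.getVert (a + 1)))
    (htb' : G.Adj (P.getVert (t + 1)) (P.getVert (b + 1))) : False := by
  rcases lt_trichotomy t a with h | rfl | h
  · exact hP.not_crossing_of_gt hx hab h hb hxa hxb hta htb'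
  · exact hta'.ne rfl
  rcases lt_trichotomy t b with h' | rfl | h'
  · exact hP.not_crossing_of_lt_of_lt hx h h' hb hxa hxb htb hta'
  · exact htb'.ne rfl
  · exact hP.not_crossing_of_lt hx hab h' ht hxa hxb hta htb'

theorem isIndepSet_insert [DecidableEq V] {X : Finset V} (hX : ↑X ⊆ P.succOfNeighborSet x) :
    G.IsIndepSet ↑(insert x X) := by
  rw [coe_insert]
  refine Set.pairwise_insert.mpr ⟨fun c hc d hd hcd => ?_, fun c hc _ => ?_⟩
  · obtain ⟨a, ha, hxa, rfl⟩ := hX hc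
    obtain ⟨b, hb, hxb, rfl⟩ := hX hd
    rcases lt_trichotomy a b with hab | rfl | hab
    · exact hP.not_adj_getVert_succ_succ hx hab hb hxa hxb
    · exact (hcd rfl).elim
    · exact fun h => hP.not_adj_getVert_succ_succ hx hab ha hxb hxa h.symm
  · obtain ⟨a, ha, hxa, rfl⟩ := hX hc
    have := hP.not_adj_getVert_succ hx ha hxa
    exact ⟨this, fun h => this h.symm⟩

end

theorem getVert_notMem (hP : P.IsLongestPath_s5) {X : Finset V} (hX : ↑X ⊆ P.succOfNeighborSet x)
    {i r s : ℕ} (hr : r ≤ P.length) (hgap : ∀ l, i < l → l < r → ¬ G.Adj x (P.getVert l))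
    (his : i + 1 < s) (hsr : s < r) : P.getVert s ∉ X := by
  intro h
  obtain ⟨l, hl, hxl, hls⟩ := hX h
  have : s = l + 1 := hP.1.getVert_injOn (by simp; omega) (by simp; omega) hls
  exact hgap l (by omega) (by omega) hxl

section

variable [DecidableEq V] [DecidableRel G.Adj] {k : ℕ} {X : Finset V} (hP : P.IsLongestPath_s5)
  (hx : x ∉ P.support) (hX : ↑X ⊆ P.succOfNeighborSet x) (hG : G.P2UnionKP1Free k)
  (hXcard : #X = 2 * k - 1)
include hP hx hX hG hXcard

theorem forall_not_adj_getVert_succ {t : ℕ} (ht : t < P.length) (hXt : P.getVert (t + 1) ∉ X)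
    (hkt : k + 1 ≤ #{w ∈ X | G.Adj (P.getVert t) w}) :
    ∀ w ∈ X, ¬ G.Adj (P.getVert (t + 1)) w := by
  intro w hw htw
  have hXind : G.IsIndepSet X := (hP.isIndepSet_insert hx hX).mono (by simp)
  have hkt' : k ≤ #{w ∈ X | G.Adj (P.getVert (t + 1)) w} := by
    have := hG.card_filter_not_adj_lt hXind htw.symm hXt fun c hc h =>
      (em (w = c)).elim (fun hwc => h.ne hwc) fun hwc => hXind hw hc hwc h
    have := card_filter_add_card_filter_not (s := X) fun w => G.Adj (P.getVert (t + 1)) w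
    omega
  have hcommon : #({w ∈ X | G.Adj (P.getVert t) w} ∩
      {w ∈ X | G.Adj (P.getVert (t + 1)) w}) ≤ 1 := by
    refine card_le_one.mpr fun c hc d hd => ?_
    simp only [mem_inter, mem_filter] at hc hd
    obtain ⟨a, ha, hxa, rfl⟩ := hX hc.1.1
    obtain ⟨b, hb, hxb, rfl⟩ := hX hd.1.1
    rcases lt_trichotomy a b with hab | rfl | hab
    · exact (hP.not_common_neighbors hx hab hb ht hxa hxb hc.1.2 hd.1.2 hc.2.2 hd.2.2).elim
    · rfl
    · exact (hP.not_common_neighbors hx hab ha ht hxb hxa hd.1.2 hc.1.2 hd.2.2 hc.2.2).elim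
  have := card_union_add_card_inter {w ∈ X | G.Adj (P.getVert t) w}
    {w ∈ X | G.Adj (P.getVert (t + 1)) w}
  have := card_le_card (union_subset (filter_subset (fun w => G.Adj (P.getVert t) w) X)
    (filter_subset (fun w => G.Adj (P.getVert (t + 1)) w) X))
  have := card_pos.mpr ⟨w, hw⟩
  omega

theorem not_adj_of_odd_and_succ_le_card_filter_adj_of_even {i r : ℕ} (hr : r ≤ P.length)
    (hgap : ∀ l, i < l → l < r → ¬ G.Adj x (P.getVert l)) (hi : P.getVert (i + 1) ∈ X) :
    ∀ j, 1 ≤ j → i + j < r →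
      (Odd j → ∀ w ∈ X, ¬ G.Adj (P.getVert (i + j)) w) ∧
      (Even j → k + 1 ≤ #{w ∈ X | G.Adj (P.getVert (i + j)) w}) := by
  have hind := hP.isIndepSet_insert hx hX
  have hxX : x ∉ X := fun h => by
    obtain ⟨l, -, -, hl⟩ := hX h
    exact hx (hl ▸ P.getVert_mem_support _)
  intro j hj
  induction j, hj using Nat.le_induction with
  | base =>
    exact fun _ => ⟨fun _ w hw h => hind (by simp [hi]) (by simp [hw]) h.ne h,
      fun h => absurd h Nat.not_even_one⟩
  | succ j hj ih =>
    intro hjr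
    obtain ⟨hodd, heven⟩ := ih (by omega)
    rw [← add_assoc]
    have hXt : P.getVert (i + j + 1) ∉ X := hP.getVert_notMem hX hr hgap (by omega) hjr
    refine ⟨fun hj' => hP.forall_not_adj_getVert_succ hx hX hG hXcard (by omega) hXt (heven ?_),
      fun hj' => hG.succ_le_card_filter_adj hind hxX hXcard (P.adj_getVert_succ (by omega))
        (hgap _ (by omega) (by omega)) (hgap _ (by omega) hjr) (hodd ?_) hXt⟩
    · simpa [Nat.odd_add_one] using hj'
    · simpa [Nat.even_add_one] using hj'

end

end IsLongestPath_s5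

end Walk

end SimpleGraph

theorem stmt_5_general {V : Type*} (G : SimpleGraph V)
    [DecidableRel G.Adj] (k : ℕ)
    (hfree : ¬ ∃ (a b : V) (c : Fin k → V), Function.Injective c ∧ a ≠ b ∧
      (∀ i, a ≠ c i) ∧ (∀ i, b ≠ c i) ∧ G.Adj a b ∧
      (∀ i, ¬ G.Adj a (c i)) ∧ (∀ i, ¬ G.Adj b (c i)) ∧ (∀ i j, ¬ G.Adj (c i) (c j)))
    (u v : V) (P : G.Walk u v) (hP : P.IsPath)
    (hlong : ∀ Q : G.Walk u v, Q.IsPath → Q.length ≤ P.length)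
    (m : ℕ) (hm : m = P.length)
    (p : ℕ → V) (hp : ∀ i, p i = P.getVert i)
    (x : V) (hx : x ∉ P.support)
    (J : Set ℕ) (hJ : J = {i | i ≤ m ∧ G.Adj x (p i)})
    (Nplus : Set V) (hNplus : Nplus = {w | ∃ i ∈ J, i < m ∧ w = p (i + 1)})
    (i r : ℕ) (hr : r ∈ J)
    (hrmin : ∀ j ∈ J, i < j → r ≤ j)
    (X : Finset V) (hXsub : ↑X ⊆ Nplus) (hX1 : p (i + 1) ∈ X)
    (hXcard : X.card = 2 * k - 1) :
    ∀ j : ℕ, 1 ≤ j → j ≤ r - i - 1 →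
      (Odd j → ∀ w ∈ X, ¬ G.Adj (p (i + j)) w) ∧
      (Even j → k + 1 ≤ (X.filter fun w => G.Adj (p (i + j)) w).card) := by
  classical
  obtain rfl : p = P.getVert := funext hp
  subst hm hJ hNplus
  have hX : ↑X ⊆ P.succOfNeighborSet x := fun w hw => by
    obtain ⟨l, ⟨-, hxl⟩, hl, rfl⟩ := hXsub hw
    exact ⟨l, hl, hxl, rfl⟩
  have hgap : ∀ l, i < l → l < r → ¬ G.Adj x (P.getVert l) := fun l hil hlr hxl =>
    (hrmin l ⟨by have := hr.1; omega, hxl⟩ hil).not_gt hlr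
  intro j hj hjr
  exact SimpleGraph.Walk.IsLongestPath_s5.not_adj_of_odd_and_succ_le_card_filter_adj_of_even
    ⟨hP, hlong⟩ hx hX hfree hXcard hr.1 hgap hX1 j hj (by omega)

/-- Claim about neighbours in X of vertices between two consecutive
neighbours of x on a longest path. -/
theorem stmt_5 {V : Type*} [Fintype V] [DecidableEq V] (G : SimpleGraph V)
    [DecidableRel G.Adj] (k : ℕ) (hk : 1 ≤ k)
    (hcard : 2 * k < Fintype.card V)
    (hconn : ∀ S : Set V, S.ncard < 2 * k → (G.induce Sᶜ).Connected)
    (hfree : ¬ ∃ (a b : V) (c : Fin k → V), Function.Injective c ∧ a ≠ b ∧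
      (∀ i, a ≠ c i) ∧ (∀ i, b ≠ c i) ∧ G.Adj a b ∧
      (∀ i, ¬ G.Adj a (c i)) ∧ (∀ i, ¬ G.Adj b (c i)) ∧ (∀ i j, ¬ G.Adj (c i) (c j)))
    (u v : V) (huv : u ≠ v) (P : G.Walk u v) (hP : P.IsPath)
    (hlong : ∀ Q : G.Walk u v, Q.IsPath → Q.length ≤ P.length)
    (m : ℕ) (hm : m = P.length)
    (p : ℕ → V) (hp : ∀ i, p i = P.getVert i)
    (x : V) (hx : x ∉ P.support)
    (hxN : ∀ w, G.Adj x w → w ∈ P.support)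
    (J : Set ℕ) (hJ : J = {i | i ≤ m ∧ G.Adj x (p i)})
    (Nplus : Set V) (hNplus : Nplus = {w | ∃ i ∈ J, i < m ∧ w = p (i + 1)})
    (i r : ℕ) (hi : i ∈ J) (hr : r ∈ J) (hir : i < r)
    (hrmin : ∀ j ∈ J, i < j → r ≤ j)
    (X : Finset V) (hXsub : ↑X ⊆ Nplus) (hX1 : p (i + 1) ∈ X)
    (hXcard : X.card = 2 * k - 1) :
    ∀ j : ℕ, 1 ≤ j → j ≤ r - i - 1 →
      (Odd j → ∀ w ∈ X, ¬ G.Adj (p (i + j)) w) ∧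
      (Even j → k + 1 ≤ (X.filter fun w => G.Adj (p (i + j)) w).card) :=
  stmt_5_general G k hfree u v P hP hlong m hm p hp x hx J hJ Nplus hNplus i r hr hrmin X hXsub hX1
    hXcard
end

section
/- Let k be a positive integer and let G be a finite simple graph that is 2k-connected and (P₂ ∪ kP₁)-free. Let u ≠ v be vertices of G, let P be a longest (u,v)-path with vertex sequence p₀ = u, …, p_m = v, and let x ∈ V(G) \ V(P) be a vertex all of whose neighbors lie on P. Set J = {i : 0 ≤ i ≤ m, p_i ∈ N(x)}, let s = min J, and set N⁺ = {p_{i+1} : i ∈ J, i < m}. Then for every odd integer j with 1 ≤ j ≤ s, the vertex p_{s−j} has no neighbor in N⁺. -/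
/-!
Each of the following would reroute `P` through `x` into a longer `(u,v)`-path: `x` adjacent to a
vertex of `N⁺`; an edge inside `N⁺`; and, for `a < i < i'` with `pᵢ, p_{i'} ∈ N(x)`, both chords
`p_a p_{i+1}` and `p_{a+1} p_{i'+1}`. So `{x} ∪ N⁺` is independent, and `(P₂ ∪ kP₁)`-freeness
bounds how much of `N⁺` an edge can miss: an edge `yz` avoiding `N(x)` misses at most `k - 2`
vertices of `N⁺` jointly, and a neighbour `z` of `x` misses at most `k - 1`. By `2k`-connectivity,
`|N⁺| ≥ |N(x)| - 1 ≥ 2k - 1`.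

If `a < s` and `p_a` had a neighbour `p_{i+1} ∈ N⁺`, the edge `p_a p_{i+1}` shows that `p_a` misses
at most `k - 2` vertices of `N⁺`; if also `p_{a+1}` misses at most `k - 1`, the crossing rule
(every vertex of `N⁺` seen by `p_{a+1}` comes no later on `P` than every one seen by `p_a`) forces
`|N⁺| ≤ 2k - 2`. The bound on `p_{a+1}` holds for `a = s - 1` since `p_s ∼ x`, and for `a = s - j`
with `j ≥ 3` odd by induction: `p_{s-j+2}` sees nothing of `N⁺`, so the edge `p_{s-j+1} p_{s-j+2}`
applies.
-/

open Finset

theorem Finset.card_add_card_le_card_add_one_of_forall_le {α : Type*} [DecidableEq α]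
    [PartialOrder α] {s t u : Finset α} (hs : s ⊆ u) (ht : t ⊆ u)
    (hts : ∀ b ∈ t, ∀ a ∈ s, b ≤ a) : #s + #t ≤ #u + 1 := by
  have hinter : #(s ∩ t) ≤ 1 := card_le_one.2 fun a ha b hb =>
    le_antisymm (hts a (mem_inter.1 ha).2 b (mem_inter.1 hb).1)
      (hts b (mem_inter.1 hb).2 a (mem_inter.1 ha).1)
  have := card_le_card (union_subset hs ht)
  rw [← card_union_add_card_inter]
  omega

namespace SimpleGraph

variable {V : Type*} {G : SimpleGraph V}

theorem Walk.exists_getVert_eq_of_adj (q : ℕ → V) (L : ℕ)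
    (hadj : ∀ i < L, G.Adj (q i) (q (i + 1))) :
    ∃ W : G.Walk (q 0) (q L), W.length = L ∧ ∀ i ≤ L, W.getVert i = q i := by
  induction L generalizing q with
  | zero => exact ⟨.nil, rfl, fun i hi => by simp [Nat.le_zero.1 hi]⟩
  | succ L ih =>
    obtain ⟨W, hlen, hW⟩ := ih (fun i => q (i + 1)) fun i hi => hadj (i + 1) (by omega)
    refine ⟨.cons (hadj 0 (by omega)) W, by simp [hlen], fun i hi => ?_⟩
    cases i with
    | zero => rfl
    | succ i => exact hW i (by omega)

theorem Walk.exists_isPath_of_injOn (q : ℕ → V) (L : ℕ)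
    (hadj : ∀ i < L, G.Adj (q i) (q (i + 1))) (hinj : Set.InjOn q {i | i ≤ L}) :
    ∃ W : G.Walk (q 0) (q L), W.IsPath ∧ W.length = L := by
  obtain ⟨W, hlen, hW⟩ := exists_getVert_eq_of_adj q L hadj
  refine ⟨W, (IsPath.getVert_injOn_iff W).1 fun i hi j hj hij => ?_, hlen⟩
  simp only [Set.mem_ofPred_eq, hlen] at hi hj
  exact hinj hi hj (by rwa [hW i hi, hW j hj] at hij)

theorem Walk.adj_getVert_of_succ_eq_or {u v : V} (p : G.Walk u v) {a b : ℕ}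
    (hab : a + 1 = b ∨ b + 1 = a) (ha : a ≤ p.length) (hb : b ≤ p.length) :
    G.Adj (p.getVert a) (p.getVert b) := by
  rcases hab with rfl | rfl
  · exact p.adj_getVert_succ (by omega)
  · exact (p.adj_getVert_succ (by omega)).symm

theorem Walk.getVert_ne_of_notMem_support {u v x : V} (p : G.Walk u v) (hx : x ∉ p.support)
    (i : ℕ) : p.getVert i ≠ x :=
  fun h => hx (h ▸ p.getVert_mem_support i)

theorem le_ncard_neighborSet [Fintype V] {n : ℕ} (hcard : n < Fintype.card V)
    (hconn : ∀ S : Set V, S.ncard < n → (G.induce Sᶜ).Connected) (x : V) :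
    n ≤ (G.neighborSet x).ncard := by
  by_contra! hlt
  have hx : x ∈ (G.neighborSet x)ᶜ := G.irrefl
  have : Nontrivial ((G.neighborSet x)ᶜ : Set V) := by
    rw [Set.nontrivial_coe_sort, ← Set.one_lt_ncard_iff_nontrivial, Set.ncard_compl,
      Nat.card_eq_fintype_card]
    omega
  obtain ⟨⟨y, hy⟩, hxy⟩ := (hconn _ hlt).preconnected.exists_adj_of_nontrivial ⟨x, hx⟩
  exact hy hxy

def HasInducedP2UnionKP1 (G : SimpleGraph V) (k : ℕ) : Prop :=
  ∃ (a b : V) (c : Fin k → V), Function.Injective c ∧ a ≠ b ∧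
    (∀ i, a ≠ c i) ∧ (∀ i, b ≠ c i) ∧ G.Adj a b ∧
    (∀ i, ¬ G.Adj a (c i)) ∧ (∀ i, ¬ G.Adj b (c i)) ∧ (∀ i j, ¬ G.Adj (c i) (c j))

theorem card_lt_of_not_hasInducedP2UnionKP1 {k : ℕ} (hfree : ¬ G.HasInducedP2UnionKP1 k)
    {a b : V} (hab : G.Adj a b) {S : Finset V} (hS : G.IsIndepSet (S : Set V))
    (ha : ∀ c ∈ S, ¬ G.Adj a c) (hb : ∀ c ∈ S, ¬ G.Adj b c) : #S < k := by
  by_contra! hk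
  obtain ⟨T, hTS, hT⟩ := exists_subset_card_eq hk
  let c : Fin k → V := fun i => T.equivFin.symm (Fin.cast hT.symm i)
  have hcS : ∀ i, c i ∈ S := fun i => hTS (T.equivFin.symm _).2
  refine hfree ⟨a, b, c, fun i j hij => ?_, hab.ne, fun i h => hb _ (hcS i) (h ▸ hab.symm),
    fun i h => ha _ (hcS i) (h ▸ hab), hab, fun i => ha _ (hcS i), fun i => hb _ (hcS i),
    fun i j hij => hS (hcS i) (hcS j) hij.ne hij⟩
  simpa using Subtype.ext hij

section LongestPath

variable {u v x : V} {P : G.Walk u v}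

theorem chain_length_le_of_longest (hlong : ∀ Q : G.Walk u v, Q.IsPath → Q.length ≤ P.length)
    (q : ℕ → V) (L : ℕ) (h0 : q 0 = u) (hL : q L = v)
    (hadj : ∀ i < L, G.Adj (q i) (q (i + 1))) (hinj : Set.InjOn q {i | i ≤ L}) :
    L ≤ P.length := by
  obtain ⟨W, hW, hlen⟩ := Walk.exists_isPath_of_injOn q L hadj hinj
  simpa [hlen] using hlong (W.copy h0 hL) (by simpa using hW)

theorem not_adj_getVert_succ_of_adj (hP : P.IsPath)
    (hlong : ∀ Q : G.Walk u v, Q.IsPath → Q.length ≤ P.length) (hx : x ∉ P.support) {t : ℕ}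
    (ht : t < P.length) (hxt : G.Adj x (P.getVert t)) : ¬ G.Adj x (P.getVert (t + 1)) := by
  intro hxt'
  have hxadj : ∀ c, c = t ∨ c = t + 1 → G.Adj x (P.getVert c) := by
    rintro c (rfl | rfl) <;> assumption
  -- `p₀ … p_t x p_{t+1} … p_m`
  let q : ℕ → V := fun r => if r ≤ t then P.getVert r else if r = t + 1 then x
    else P.getVert (r - 1)
  suffices P.length + 1 ≤ P.length by omega
  refine chain_length_le_of_longest hlong q _ (by simp [q]) ?_ (fun r hr => ?_) ?_
  · simp [q, show ¬ P.length + 1 ≤ t by omega, show P.length ≠ t by omega]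
  · simp only [q]
    split_ifs <;> first
      | (exfalso; omega)
      | exact hxadj _ (by omega)
      | exact (hxadj _ (by omega)).symm
      | (refine P.adj_getVert_of_succ_eq_or ?_ ?_ ?_ <;> omega)
  · intro r₁ h₁ r₂ h₂ hq
    simp only [Set.mem_ofPred_eq, q] at h₁ h₂ hq
    split_ifs at hq <;> first
      | omega
      | exact absurd hq (P.getVert_ne_of_notMem_support hx _)
      | exact absurd hq.symm (P.getVert_ne_of_notMem_support hx _)
      | (have := hP.getVert_injOn (by simp; omega) (by simp; omega) hq; omega)

theorem not_adj_getVert_succ_succ (hP : P.IsPath)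
    (hlong : ∀ Q : G.Walk u v, Q.IsPath → Q.length ≤ P.length) (hx : x ∉ P.support) {t t' : ℕ}
    (htt' : t < t') (ht' : t' < P.length) (hxt : G.Adj x (P.getVert t))
    (hxt' : G.Adj x (P.getVert t')) : ¬ G.Adj (P.getVert (t + 1)) (P.getVert (t' + 1)) := by
  intro hsucc
  have hxadj : ∀ c, c = t ∨ c = t' → G.Adj x (P.getVert c) := by
    rintro c (rfl | rfl) <;> assumption
  have hsucc' : ∀ c d, c = t + 1 → d = t' + 1 → G.Adj (P.getVert c) (P.getVert d) := by
    rintro c d rfl rfl; exact hsucc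
  -- `p₀ … p_t x p_{t'} p_{t'-1} … p_{t+1} p_{t'+1} … p_m`
  let q : ℕ → V := fun r => if r ≤ t then P.getVert r else if r = t + 1 then x
    else if r ≤ t' + 1 then P.getVert (t + t' + 2 - r) else P.getVert (r - 1)
  suffices P.length + 1 ≤ P.length by omega
  refine chain_length_le_of_longest hlong q _ (by simp [q]) ?_ (fun r hr => ?_) ?_
  · simp [q, show ¬ P.length + 1 ≤ t by omega, show P.length ≠ t by omega,
      show ¬ P.length ≤ t' by omega]
  · simp only [q]
    split_ifs <;> first
      | (exfalso; omega)
      | exact hxadj _ (by omega)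
      | exact (hxadj _ (by omega)).symm
      | exact hsucc' _ _ (by omega) (by omega)
      | (refine P.adj_getVert_of_succ_eq_or ?_ ?_ ?_ <;> omega)
  · intro r₁ h₁ r₂ h₂ hq
    simp only [Set.mem_ofPred_eq, q] at h₁ h₂ hq
    split_ifs at hq <;> first
      | omega
      | exact absurd hq (P.getVert_ne_of_notMem_support hx _)
      | exact absurd hq.symm (P.getVert_ne_of_notMem_support hx _)
      | (have := hP.getVert_injOn (by simp; omega) (by simp; omega) hq; omega)

theorem not_adj_getVert_succ_of_crossing (hP : P.IsPath)
    (hlong : ∀ Q : G.Walk u v, Q.IsPath → Q.length ≤ P.length) (hx : x ∉ P.support)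
    {a i i' : ℕ} (hai : a < i) (hii' : i < i') (hi' : i' < P.length)
    (hxi : G.Adj x (P.getVert i)) (hxi' : G.Adj x (P.getVert i'))
    (hchord : G.Adj (P.getVert a) (P.getVert (i + 1))) :
    ¬ G.Adj (P.getVert (a + 1)) (P.getVert (i' + 1)) := by
  intro hchord'
  have hxadj : ∀ c, c = i ∨ c = i' → G.Adj x (P.getVert c) := by
    rintro c (rfl | rfl) <;> assumption
  have hchords : ∀ c d, (c = a ∧ d = i + 1) ∨ (c = a + 1 ∧ d = i' + 1) →
      G.Adj (P.getVert c) (P.getVert d) := by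
    rintro c d (⟨rfl, rfl⟩ | ⟨rfl, rfl⟩) <;> assumption
  -- `p₀ … p_a p_{i+1} … p_{i'} x p_i p_{i-1} … p_{a+1} p_{i'+1} … p_m`
  let q : ℕ → V := fun r => if r ≤ a then P.getVert r
    else if r ≤ a + (i' - i) then P.getVert (i + r - a)
    else if r = a + (i' - i) + 1 then x
    else if r ≤ i' + 1 then P.getVert (a + (i' - i) + 2 + i - r) else P.getVert (r - 1)
  suffices P.length + 1 ≤ P.length by omega
  refine chain_length_le_of_longest hlong q _ (by simp [q]) ?_ (fun r hr => ?_) ?_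
  · simp [q, show ¬ P.length + 1 ≤ a by omega, show ¬ P.length + 1 ≤ a + (i' - i) by omega,
      show P.length ≠ a + (i' - i) by omega, show ¬ P.length ≤ i' by omega]
  · simp only [q]
    split_ifs <;> first
      | (exfalso; omega)
      | exact hxadj _ (by omega)
      | exact (hxadj _ (by omega)).symm
      | exact hchords _ _ (by omega)
      | exact (hchords _ _ (by omega)).symm
      | (refine P.adj_getVert_of_succ_eq_or ?_ ?_ ?_ <;> omega)
  · intro r₁ h₁ r₂ h₂ hq
    simp only [Set.mem_ofPred_eq, q] at h₁ h₂ hq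
    split_ifs at hq <;> first
      | omega
      | exact absurd hq (P.getVert_ne_of_notMem_support hx _)
      | exact absurd hq.symm (P.getVert_ne_of_notMem_support hx _)
      | (have := hP.getVert_injOn (by simp; omega) (by simp; omega) hq; omega)

open Classical in
/-- `N⁺ = {P.getVert (i + 1) | i ∈ nbrIdx P x}`. -/
noncomputable def nbrIdx (P : G.Walk u v) (x : V) : Finset ℕ :=
  {i ∈ range P.length | G.Adj x (P.getVert i)}

open Classical in
/-- The indices of `N⁺ \ N(y)`. -/
noncomputable def missedIdx (P : G.Walk u v) (x y : V) : Finset ℕ :=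
  {i ∈ nbrIdx P x | ¬ G.Adj y (P.getVert (i + 1))}

theorem mem_nbrIdx {i : ℕ} : i ∈ nbrIdx P x ↔ i < P.length ∧ G.Adj x (P.getVert i) := by
  simp [nbrIdx]

theorem mem_missedIdx {y : V} {i : ℕ} :
    i ∈ missedIdx P x y ↔ i ∈ nbrIdx P x ∧ ¬ G.Adj y (P.getVert (i + 1)) := by
  simp [missedIdx]

theorem missedIdx_subset (y : V) : missedIdx P x y ⊆ nbrIdx P x :=
  fun _ hi => (mem_missedIdx.1 hi).1

theorem ncard_neighborSet_le_card_nbrIdx (hxN : ∀ w, G.Adj x w → w ∈ P.support) :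
    (G.neighborSet x).ncard ≤ #(nbrIdx P x) + 1 := by
  have hsub : G.neighborSet x ⊆ P.getVert '' ↑(insert P.length (nbrIdx P x)) := by
    intro w hw
    obtain ⟨n, rfl, hn⟩ := Walk.mem_support_iff_exists_getVert.1 (hxN w hw)
    rcases hn.lt_or_eq with hn | rfl
    · exact ⟨n, by simp [mem_nbrIdx.2 ⟨hn, hw⟩], rfl⟩
    · exact ⟨P.length, by simp, rfl⟩
  calc (G.neighborSet x).ncard ≤ (P.getVert '' ↑(insert P.length (nbrIdx P x))).ncard :=
        Set.ncard_le_ncard hsub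
    _ ≤ #(insert P.length (nbrIdx P x)) := by
        simpa only [Set.ncard_coe_finset] using Set.ncard_image_le (finite_toSet _)
    _ ≤ #(nbrIdx P x) + 1 := card_insert_le _ _

theorem isIndepSet_image_getVert_succ (hP : P.IsPath)
    (hlong : ∀ Q : G.Walk u v, Q.IsPath → Q.length ≤ P.length) (hx : x ∉ P.support)
    {C : Finset ℕ} (hC : C ⊆ nbrIdx P x) :
    G.IsIndepSet ((fun i => P.getVert (i + 1)) '' C) := by
  rintro _ ⟨i, hi, rfl⟩ _ ⟨j, hj, rfl⟩ hne
  obtain ⟨hi, hxi⟩ := mem_nbrIdx.1 (hC hi)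
  obtain ⟨hj, hxj⟩ := mem_nbrIdx.1 (hC hj)
  rcases lt_trichotomy i j with hij | rfl | hij
  · exact not_adj_getVert_succ_succ hP hlong hx hij hj hxi hxj
  · exact absurd rfl hne
  · exact fun h => not_adj_getVert_succ_succ hP hlong hx hij hi hxj hxi h.symm

theorem card_image_getVert_succ [DecidableEq V] (hP : P.IsPath) {C : Finset ℕ}
    (hC : C ⊆ nbrIdx P x) : #(C.image fun i => P.getVert (i + 1)) = #C := by
  refine card_image_of_injOn fun i hi j hj hij => ?_
  have hi := (mem_nbrIdx.1 (hC hi)).1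
  have hj := (mem_nbrIdx.1 (hC hj)).1
  have := hP.getVert_injOn (by simp; omega) (by simp; omega) hij
  omega

theorem card_missedIdx_lt_of_adj (hP : P.IsPath)
    (hlong : ∀ Q : G.Walk u v, Q.IsPath → Q.length ≤ P.length) (hx : x ∉ P.support) {k : ℕ}
    (hfree : ¬ G.HasInducedP2UnionKP1 k) {z : V} (hxz : G.Adj x z) :
    #(missedIdx P x z) < k := by
  classical
  rw [← card_image_getVert_succ hP (missedIdx_subset z)]
  refine card_lt_of_not_hasInducedP2UnionKP1 hfree hxz ?_ ?_ ?_
  · simpa using isIndepSet_image_getVert_succ hP hlong hx (missedIdx_subset z)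
  · simp only [mem_image]
    rintro _ ⟨i, hi, rfl⟩
    obtain ⟨hi, hxi⟩ := mem_nbrIdx.1 (missedIdx_subset z hi)
    exact not_adj_getVert_succ_of_adj hP hlong hx hi hxi
  · simp only [mem_image]
    rintro _ ⟨i, hi, rfl⟩
    exact (mem_missedIdx.1 hi).2

theorem card_missedIdx_inter_add_one_lt (hP : P.IsPath)
    (hlong : ∀ Q : G.Walk u v, Q.IsPath → Q.length ≤ P.length) (hx : x ∉ P.support) {k : ℕ}
    (hfree : ¬ G.HasInducedP2UnionKP1 k) {y z : V} (hyz : G.Adj y z) (hxy : ¬ G.Adj x y)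
    (hxz : ¬ G.Adj x z) : #(missedIdx P x y ∩ missedIdx P x z) + 1 < k := by
  classical
  set C := missedIdx P x y ∩ missedIdx P x z
  have hC : C ⊆ nbrIdx P x := inter_subset_left.trans (missedIdx_subset y)
  have hxC : x ∉ C.image fun i => P.getVert (i + 1) := by
    simp only [mem_image, not_exists, not_and]
    exact fun i _ => P.getVert_ne_of_notMem_support hx _
  rw [← card_image_getVert_succ hP hC, ← card_insert_of_notMem hxC]
  refine card_lt_of_not_hasInducedP2UnionKP1 hfree hyz ?_ ?_ ?_
  · rw [coe_insert, coe_image]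
    refine (isIndepSet_image_getVert_succ hP hlong hx hC).insert ?_
    rintro _ ⟨i, hi, rfl⟩ -
    obtain ⟨hi, hxi⟩ := mem_nbrIdx.1 (hC hi)
    have := not_adj_getVert_succ_of_adj hP hlong hx hi hxi
    exact ⟨this, fun h => this h.symm⟩
  · simp only [mem_insert, mem_image]
    rintro _ (rfl | ⟨i, hi, rfl⟩)
    · exact fun h => hxy h.symm
    · exact (mem_missedIdx.1 (mem_inter.1 hi).1).2
  · simp only [mem_insert, mem_image]
    rintro _ (rfl | ⟨i, hi, rfl⟩)
    · exact fun h => hxz h.symm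
    · exact (mem_missedIdx.1 (mem_inter.1 hi).2).2

theorem adj_of_mem_sdiff_missedIdx {y : V} {i : ℕ} (hi : i ∈ nbrIdx P x \ missedIdx P x y) :
    G.Adj y (P.getVert (i + 1)) := by
  simp only [mem_sdiff, mem_missedIdx, not_and, not_not] at hi
  exact hi.2 hi.1

theorem missedIdx_getVert_eq_nbrIdx (hP : P.IsPath)
    (hlong : ∀ Q : G.Walk u v, Q.IsPath → Q.length ≤ P.length) (hx : x ∉ P.support) {k : ℕ}
    (hfree : ¬ G.HasInducedP2UnionKP1 k) (hT : 2 * k ≤ #(nbrIdx P x) + 1) {a : ℕ}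
    (hbefore : ∀ r ≤ a, ¬ G.Adj x (P.getVert r))
    (hnext : #(missedIdx P x (P.getVert (a + 1))) < k) :
    missedIdx P x (P.getVert a) = nbrIdx P x := by
  refine Subset.antisymm (missedIdx_subset _) fun i hi => mem_missedIdx.2 ⟨hi, fun hchord => ?_⟩
  obtain ⟨hi, hxi⟩ := mem_nbrIdx.1 hi
  have hafter : ∀ t ∈ nbrIdx P x, a < t := fun t ht => by
    by_contra! h
    exact hbefore t h (mem_nbrIdx.1 ht).2
  have hmissed : missedIdx P x (P.getVert a) ⊆
      missedIdx P x (P.getVert a) ∩ missedIdx P x (P.getVert (i + 1)) := by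
    intro t ht
    obtain ⟨htT, hat⟩ := mem_missedIdx.1 ht
    obtain ⟨ht, hxt⟩ := mem_nbrIdx.1 htT
    refine mem_inter.2 ⟨mem_missedIdx.2 ⟨htT, hat⟩, mem_missedIdx.2 ⟨htT, ?_⟩⟩
    rcases lt_trichotomy t i with hti | rfl | hti
    · exact fun h => not_adj_getVert_succ_succ hP hlong hx hti hi hxt hxi h.symm
    · exact absurd hchord hat
    · exact not_adj_getVert_succ_succ hP hlong hx hti ht hxi hxt
  have hcard := card_missedIdx_inter_add_one_lt hP hlong hx hfree hchord (hbefore a le_rfl)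
    (not_adj_getVert_succ_of_adj hP hlong hx hi hxi)
  have hcross := card_add_card_le_card_add_one_of_forall_le
    (sdiff_subset (s := nbrIdx P x) (t := missedIdx P x (P.getVert a)))
    (sdiff_subset (t := missedIdx P x (P.getVert (a + 1))))
    fun t ht t' ht' => by
      by_contra! htt'
      obtain ⟨htm, hxt⟩ := mem_nbrIdx.1 (sdiff_subset ht)
      obtain ⟨-, hxt'⟩ := mem_nbrIdx.1 (sdiff_subset ht')
      exact not_adj_getVert_succ_of_crossing hP hlong hx (hafter t' (sdiff_subset ht')) htt' htm
        hxt' hxt (adj_of_mem_sdiff_missedIdx ht') (adj_of_mem_sdiff_missedIdx ht)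
  rw [card_sdiff_of_subset (missedIdx_subset _), card_sdiff_of_subset (missedIdx_subset _)]
    at hcross
  have := card_le_card hmissed
  have := card_le_card (missedIdx_subset (P := P) (x := x) (P.getVert a))
  have := card_le_card (missedIdx_subset (P := P) (x := x) (P.getVert (a + 1)))
  omega

theorem missedIdx_getVert_sub_odd_eq_nbrIdx (hP : P.IsPath)
    (hlong : ∀ Q : G.Walk u v, Q.IsPath → Q.length ≤ P.length) (hx : x ∉ P.support) {k : ℕ}
    (hfree : ¬ G.HasInducedP2UnionKP1 k) (hT : 2 * k ≤ #(nbrIdx P x) + 1) {s : ℕ}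
    (hsl : s ≤ P.length) (hs : G.Adj x (P.getVert s)) (hbefore : ∀ r < s, ¬ G.Adj x (P.getVert r))
    (n : ℕ) (hn : 2 * n + 1 ≤ s) : missedIdx P x (P.getVert (s - (2 * n + 1))) = nbrIdx P x := by
  induction n with
  | zero =>
    refine missedIdx_getVert_eq_nbrIdx hP hlong hx hfree hT (fun r hr => hbefore r (by omega)) ?_
    rw [show s - (2 * 0 + 1) + 1 = s by omega]
    exact card_missedIdx_lt_of_adj hP hlong hx hfree hs
  | succ n ih =>
    refine missedIdx_getVert_eq_nbrIdx hP hlong hx hfree hT (fun r hr => hbefore r (by omega)) ?_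
    have hcard := card_missedIdx_inter_add_one_lt hP hlong hx hfree
      (P.adj_getVert_succ (i := s - (2 * (n + 1) + 1) + 1) (by omega))
      (hbefore _ (by omega)) (hbefore _ (by omega))
    rw [show s - (2 * (n + 1) + 1) + 1 + 1 = s - (2 * n + 1) by omega, ih (by omega),
      inter_eq_left.2 (missedIdx_subset _)] at hcard
    omega

end LongestPath

end SimpleGraph

open SimpleGraph

theorem stmt_7_general {V : Type*} [Fintype V] (G : SimpleGraph V) (k : ℕ)
    (hcard : 2 * k < Fintype.card V)
    (hconn : ∀ S : Set V, S.ncard < 2 * k → (G.induce Sᶜ).Connected)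
    (hfree : ¬ ∃ (a b : V) (c : Fin k → V), Function.Injective c ∧ a ≠ b ∧
      (∀ i, a ≠ c i) ∧ (∀ i, b ≠ c i) ∧ G.Adj a b ∧
      (∀ i, ¬ G.Adj a (c i)) ∧ (∀ i, ¬ G.Adj b (c i)) ∧ (∀ i j, ¬ G.Adj (c i) (c j)))
    (u v : V) (P : G.Walk u v) (hP : P.IsPath)
    (hlong : ∀ Q : G.Walk u v, Q.IsPath → Q.length ≤ P.length)
    (m : ℕ) (hm : m = P.length)
    (p : ℕ → V) (hp : ∀ i, p i = P.getVert i)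
    (x : V) (hx : x ∉ P.support)
    (hxN : ∀ w, G.Adj x w → w ∈ P.support)
    (J : Set ℕ) (hJ : J = {i | i ≤ m ∧ G.Adj x (p i)})
    (s : ℕ) (hs : s = sInf J)
    (Nplus : Set V) (hNplus : Nplus = {w | ∃ i ∈ J, i < m ∧ w = p (i + 1)}) :
    ∀ j : ℕ, Odd j → 1 ≤ j → j ≤ s →
      ∀ w ∈ Nplus, ¬ G.Adj (p (s - j)) w := by
  rintro j ⟨n, rfl⟩ - hjs w hw
  obtain rfl : p = P.getVert := funext hp
  subst hm hJ hs hNplus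
  obtain ⟨i, ⟨-, hxi⟩, hi, rfl⟩ := hw
  set J := {i | i ≤ P.length ∧ G.Adj x (P.getVert i)}
  have hsJ : sInf J ∈ J := Nat.sInf_mem ⟨i, hi.le, hxi⟩
  have hbefore : ∀ r < sInf J, ¬ G.Adj x (P.getVert r) :=
    fun r hr hxr => Nat.notMem_of_lt_sInf hr ⟨(hr.trans_le hsJ.1).le, hxr⟩
  have hT : 2 * k ≤ #(nbrIdx P x) + 1 :=
    (le_ncard_neighborSet hcard hconn x).trans (ncard_neighborSet_le_card_nbrIdx hxN)
  have hmissed := missedIdx_getVert_sub_odd_eq_nbrIdx hP hlong hx hfree hT hsJ.1 hsJ.2 hbefore n hjs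
  exact (mem_missedIdx.1 (hmissed ▸ mem_nbrIdx.2 ⟨hi, hxi⟩)).2

/-- Vertices at odd distance before the first neighbour of x on P
have no neighbour in N⁺. -/
theorem stmt_7 {V : Type*} [Fintype V] [DecidableEq V] (G : SimpleGraph V) (k : ℕ)
    (hk : 1 ≤ k)
    (hcard : 2 * k < Fintype.card V)
    (hconn : ∀ S : Set V, S.ncard < 2 * k → (G.induce Sᶜ).Connected)
    (hfree : ¬ ∃ (a b : V) (c : Fin k → V), Function.Injective c ∧ a ≠ b ∧
      (∀ i, a ≠ c i) ∧ (∀ i, b ≠ c i) ∧ G.Adj a b ∧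
      (∀ i, ¬ G.Adj a (c i)) ∧ (∀ i, ¬ G.Adj b (c i)) ∧ (∀ i j, ¬ G.Adj (c i) (c j)))
    (u v : V) (huv : u ≠ v) (P : G.Walk u v) (hP : P.IsPath)
    (hlong : ∀ Q : G.Walk u v, Q.IsPath → Q.length ≤ P.length)
    (m : ℕ) (hm : m = P.length)
    (p : ℕ → V) (hp : ∀ i, p i = P.getVert i)
    (x : V) (hx : x ∉ P.support)
    (hxN : ∀ w, G.Adj x w → w ∈ P.support)
    (J : Set ℕ) (hJ : J = {i | i ≤ m ∧ G.Adj x (p i)})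
    (s : ℕ) (hs : s = sInf J)
    (Nplus : Set V) (hNplus : Nplus = {w | ∃ i ∈ J, i < m ∧ w = p (i + 1)}) :
    ∀ j : ℕ, Odd j → 1 ≤ j → j ≤ s →
      ∀ w ∈ Nplus, ¬ G.Adj (p (s - j)) w :=
  stmt_7_general G k hcard hconn hfree u v P hP hlong m hm p hp x hx hxN J hJ s hs Nplus hNplus
end
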